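/- The sets U_0,…,U_{n_1+r-1} cover the product of digital spheres S_min^{n_1} × ⋯ × S_min^{n_r}, where for 0 ≤ i ≤ n_1 - 1, U_i = S_i^0 × ∏_{q=2}^r S_min^{n_q - 1}; for i = n_1 - 1 + k with 1 ≤ k ≤ r-1, U_i = ⋃_{|J| = k} Q_J over subsets J ⊆ {1,…,r} of cardinality k; and U_{n_1+r-1} = S_{n_1}^0 × ⋯ × S_{n_r}^0. -/
import Mathlib


def Smin (n : ℕ) : Set (Fin (n + 1) → ℤ) :=
  {x | ∃ j, (x j = 1 ∨ x j = -1) ∧ ∀ i, i ≠ j → x i = 0}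

def Sk0 (n : ℕ) (k : Fin (n + 1)) : Set (Fin (n + 1) → ℤ) :=
  {x | (x k = 1 ∨ x k = -1) ∧ ∀ i, i ≠ k → x i = 0}

def SnTop (n : ℕ) : Set (Fin (n + 1) → ℤ) := Sk0 n (Fin.last n)

def SminLower (n : ℕ) : Set (Fin (n + 1) → ℤ) :=
  {x | x ∈ Smin n ∧ x (Fin.last n) = 0}

def QJ (r : ℕ) (n : Fin r → ℕ) (J : Finset (Fin r)) :
    Set ((j : Fin r) → Fin (n j + 1) → ℤ) :=
  {u | ∀ j, if j ∈ J then u j ∈ SnTop (n j) else u j ∈ SminLower (n j)}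

/-- The product of digital spheres. -/
def ProdSphere (r : ℕ) (n : Fin r → ℕ) : Set ((j : Fin r) → Fin (n j + 1) → ℤ) :=
  {u | ∀ j, u j ∈ Smin (n j)}

/-- U_i = S_i^0 × ∏_{q=2}^r S_min^{n_q - 1} for 0 ≤ i ≤ n₁ - 1. -/
def Ulow (r : ℕ) (n : Fin r → ℕ) (hr : 0 < r) (i : Fin (n ⟨0, hr⟩)) :
    Set ((j : Fin r) → Fin (n j + 1) → ℤ) :=
  {u | u ⟨0, hr⟩ ∈ Sk0 (n ⟨0, hr⟩) i.castSucc ∧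
    ∀ j, j ≠ ⟨0, hr⟩ → u j ∈ SminLower (n j)}

/-- The sets U_0, …, U_{n₁+r-1} cover S_min^{n₁} × ⋯ × S_min^{n_r}: every point
of the product lies in some U_i with 0 ≤ i ≤ n₁-1 (a `Ulow`), or in some
U_{n₁-1+k} = ⋃_{|J|=k} Q_J with 1 ≤ k ≤ r-1, or in U_{n₁+r-1} = S_{n₁}^0 × ⋯ × S_{n_r}^0
(which is Q_J for J = univ). -/
theorem cover_prod_sphere (r : ℕ) (hr : 0 < r) (n : Fin r → ℕ)
    (hpos : ∀ j, 0 < n j) (hmono : Monotone n) :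
    ∀ u ∈ ProdSphere r n,
      (∃ i : Fin (n ⟨0, hr⟩), u ∈ Ulow r n hr i) ∨
      (∃ k : ℕ, 1 ≤ k ∧ k ≤ r - 1 ∧
        ∃ J : Finset (Fin r), J.card = k ∧ u ∈ QJ r n J) ∨
      u ∈ QJ r n Finset.univ := by
  classical
  intro u hu
  set J : Finset (Fin r) := Finset.univ.filter (fun j => u j (Fin.last (n j)) ≠ 0) with hJdef
  have hQ : u ∈ QJ r n J := by
    intro j
    by_cases h : j ∈ J
    · simp only [h, if_true]
      have hne : u j (Fin.last (n j)) ≠ 0 := by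
        simpa [hJdef] using h
      obtain ⟨i, hi1, hi2⟩ := hu j
      have hil : Fin.last (n j) = i := by
        by_contra hc
        exact hne (hi2 _ hc)
      exact ⟨hil ▸ hi1, fun i' hi' => hi2 i' (hil ▸ hi')⟩
    · simp only [h, if_false]
      have h0 : u j (Fin.last (n j)) = 0 := by
        by_contra hc
        exact h (by simpa [hJdef] using hc)
      exact ⟨hu j, h0⟩
  by_cases hJu : J = Finset.univ
  · right; right; rwa [hJu] at hQ
  by_cases hJe : J = ∅
  · left
    rw [hJe] at hQ
    have h0 := hQ ⟨0, hr⟩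
    simp only [Finset.notMem_empty, if_false] at h0
    obtain ⟨⟨i, hi1, hi2⟩, hlast⟩ := h0
    have hine : i ≠ Fin.last (n ⟨0, hr⟩) := by
      rintro rfl
      rcases hi1 with h | h <;> simp [h] at hlast
    have hilt : (i : ℕ) < n ⟨0, hr⟩ :=
      lt_of_le_of_ne (Nat.lt_succ_iff.mp i.isLt) (fun h => hine (Fin.ext h))
    refine ⟨⟨(i : ℕ), hilt⟩, ⟨?_, ?_⟩, fun j hj => ?_⟩
    · have heq : (Fin.castSucc (⟨(i : ℕ), hilt⟩ : Fin (n ⟨0, hr⟩))) = i := Fin.ext rfl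
      rw [heq]; exact hi1
    · intro i' hi'
      refine hi2 i' (fun hc => hi' ?_)
      exact Fin.ext (by simpa using congrArg Fin.val hc)
    · have := hQ j
      simpa using this
  · right; left
    refine ⟨J.card, ?_, ?_, J, rfl, hQ⟩
    · exact Finset.card_pos.mpr (Finset.nonempty_of_ne_empty hJe)
    · have : J.card < r := by
        have := Finset.card_lt_card (Finset.ssubset_univ_iff.mpr hJu)
        simpa using this
      omega
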